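/- arXiv:2307.14762 — 2 statements merged into one kernel-verified Lean document; each statement's English description precedes it below -/
import Mathlib

section
/- Let ω ∈ W₀ with associated weight matrix 𝓜_ω = {W^{(ℓ)} : ℓ > 0}. Suppose there exists s > 0 such that the weight function ω^s defined by ω^s(t) := ω(t^s) satisfies (ω₅) (i.e. ω^s(t) = o(t) as t → ∞) and condition (α₀). Then there exists a weight matrix 𝓤 = {U^{(ℓ)} : ℓ > 0}, R-equivalent to 𝓜_ω, such that for each ℓ > 0 the sequence (j^{−sj}·U^{(ℓ)}_j)_j is equivalent to a log-convex sequence. -/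
open Filter Complex Asymptotics
open scoped Topology BigOperators

noncomputable section

/-- The open sector in ℂ of opening `α·π` bisected by the positive real axis. -/
def Sector (α : ℝ) : Set ℂ := {z : ℂ | z ≠ 0 ∧ |Complex.arg z| < α * Real.pi / 2}

/-- The Roumieu ultraholomorphic class `A_{{M}}(S_α)`. -/
def ASet (M : ℕ → ℝ) (α : ℝ) : Set (ℂ → ℂ) :=
  {f | DifferentiableOn ℂ f (Sector α) ∧
    ∃ h > (0:ℝ), ∃ C : ℝ, ∀ j : ℕ, ∀ z ∈ Sector α,
      ‖iteratedDerivWithin j f (Sector α) z‖ ≤ C * h ^ j * M j}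

/-- Equivalence of sequences: `a_j ≤ A·B^j·b_j` and `b_j ≤ A·B^j·a_j`. -/
def SeqEquiv (a b : ℕ → ℝ) : Prop :=
  ∃ A > (0:ℝ), ∃ B > (0:ℝ), ∀ j : ℕ, a j ≤ A * B ^ j * b j ∧ b j ≤ A * B ^ j * a j

/-- Log-convexity: `L_j² ≤ L_{j-1}·L_{j+1}` for `j ≥ 1`. -/
def IsLogConvexSeq (L : ℕ → ℝ) : Prop := ∀ j : ℕ, L (j+1) ^ 2 ≤ L j * L (j+2)

/-- `Gbar s j = j^{s·j}` (with the convention `0⁰ = 1`, automatic for `rpow`). -/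
def Gbar (s : ℝ) (j : ℕ) : ℝ := (j : ℝ) ^ (s * (j : ℝ))

/-- Weight matrix: positive sequences, first term 1, nondecreasing in the parameter. -/
def IsWeightMatrix (M : ℝ → ℕ → ℝ) : Prop :=
  (∀ p > (0:ℝ), ∀ j : ℕ, 0 < M p j) ∧ (∀ p > (0:ℝ), M p 0 = 1) ∧
    (∀ p q : ℝ, 0 < p → p ≤ q → ∀ j : ℕ, M p j ≤ M q j)

/-- The class `A_{{𝓜}}(S_α)` associated with a weight matrix. -/
def AMatSet (M : ℝ → ℕ → ℝ) (α : ℝ) : Set (ℂ → ℂ) := {f | ∃ p > (0:ℝ), f ∈ ASet (M p) α}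

/-- `M̌_j = M_j/j!`. -/
def checkSeq (N : ℕ → ℝ) (j : ℕ) : ℝ := N j / (Nat.factorial j : ℝ)

/-- Condition `(𝓜_{rai})`. -/
def Mrai (M : ℝ → ℕ → ℝ) : Prop :=
  ∀ p > (0:ℝ), ∃ C > (0:ℝ), ∃ p' > (0:ℝ), ∀ j k : ℕ, 1 ≤ j → j ≤ k →
    (checkSeq (M p) j) ^ ((j:ℝ)⁻¹) ≤ C * (checkSeq (M p') k) ^ ((k:ℝ)⁻¹)

/-- Condition `(𝓜_{C^ω})`. -/
def MComega (M : ℝ → ℕ → ℝ) : Prop :=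
  ∃ p > (0:ℝ),
    0 < Filter.liminf (fun j : ℕ => (checkSeq (M p) j) ^ ((j:ℝ)⁻¹)) Filter.atTop

/-- Condition `(𝓜_{dc})`. -/
def Mdc (M : ℝ → ℕ → ℝ) : Prop :=
  ∀ p > (0:ℝ), ∃ C > (0:ℝ), ∃ p' > (0:ℝ), ∀ j : ℕ, M p (j+1) ≤ C ^ (j+1) * M p' j

/-- `N°_k`: maximum of `N_ℓ·N_{j₁}⋯N_{j_ℓ}` over `j_i ∈ ℕ, j₁+⋯+j_ℓ = k`; `N°₀ = 1`. -/
def circSeq (N : ℕ → ℝ) (k : ℕ) : ℝ :=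
  if k = 0 then 1 else
    sSup {x : ℝ | ∃ (l : ℕ) (js : Fin l → ℕ), (∀ i, 1 ≤ js i) ∧ (∑ i, js i) = k ∧
      x = N l * ∏ i, N (js i)}

/-- `(rai)` for a single sequence. -/
def SeqRai (N : ℕ → ℝ) : Prop :=
  ∃ C > (0:ℝ), ∀ j k : ℕ, 1 ≤ j → j ≤ k →
    (checkSeq N j) ^ ((j:ℝ)⁻¹) ≤ C * (checkSeq N k) ^ ((k:ℝ)⁻¹)

/-- `(dc)` for a single sequence. -/
def SeqDc (N : ℕ → ℝ) : Prop := ∃ D ≥ (1:ℝ), ∀ j : ℕ, N (j+1) ≤ D ^ (j+1) * N j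

/-- `(FdB)` for a single sequence. -/
def SeqFdB (N : ℕ → ℝ) : Prop :=
  ∃ C ≥ (1:ℝ), ∃ h ≥ (1:ℝ), ∀ j : ℕ, circSeq (checkSeq N) j ≤ C * h ^ j * checkSeq N j

/-- Condition `(𝓜_{FdB})`. -/
def MFdB (M : ℝ → ℕ → ℝ) : Prop :=
  ∀ p > (0:ℝ), ∃ p' > (0:ℝ), ∃ C : ℝ, ∀ k : ℕ, 1 ≤ k →
    (circSeq (checkSeq (M p)) k / checkSeq (M p') k) ^ ((k:ℝ)⁻¹) ≤ C

/-- `L` is the log-convex minorant of `a` (within positive log-convex sequences). -/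
def IsLcMinorant (a L : ℕ → ℝ) : Prop :=
  (∀ j, 0 < L j) ∧ IsLogConvexSeq L ∧ (∀ j, L j ≤ a j) ∧
    ∀ L' : ℕ → ℝ, (∀ j, 0 < L' j) → IsLogConvexSeq L' → (∀ j, L' j ≤ a j) → ∀ j, L' j ≤ L j

/-- Holomorphic closedness of a class of functions on `S_α`. -/
def HolClosed (S : Set (ℂ → ℂ)) (α : ℝ) : Prop :=
  ∀ f ∈ S, ∀ U : Set ℂ, IsOpen U → closure (f '' Sector α) ⊆ U →
    ∀ g : ℂ → ℂ, DifferentiableOn ℂ g U → g ∘ f ∈ S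

/-- Inverse closedness of a class of functions on `S_α`. -/
def InvClosed (S : Set (ℂ → ℂ)) (α : ℝ) : Prop :=
  ∀ f ∈ S, (∃ c > (0:ℝ), ∀ z ∈ Sector α, c ≤ ‖f z‖) → (fun z => (f z)⁻¹) ∈ S

/-- The class `H_{{𝓜}}(U)` for a weight matrix. -/
def HMatClass (M : ℝ → ℕ → ℝ) (U : Set ℂ) : Set (ℂ → ℂ) :=
  {g | DifferentiableOn ℂ g U ∧ ∀ K : Set ℂ, K ⊆ U → IsCompact K →
    ∃ p > (0:ℝ), ∃ h > (0:ℝ), ∃ C : ℝ, ∀ j : ℕ, ∀ z ∈ K,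
      ‖iteratedDerivWithin j g U z‖ ≤ C * h ^ j * M p j}

/-- The class `H_{{M}}(U)` for a single sequence. -/
def HSeqClass (N : ℕ → ℝ) (U : Set ℂ) : Set (ℂ → ℂ) :=
  {g | DifferentiableOn ℂ g U ∧ ∀ K : Set ℂ, K ⊆ U → IsCompact K →
    ∃ h > (0:ℝ), ∃ C : ℝ, ∀ j : ℕ, ∀ z ∈ K,
      ‖iteratedDerivWithin j g U z‖ ≤ C * h ^ j * N j}

/-- Closedness under composition for the matrix class. -/
def CompClosedMat (M : ℝ → ℕ → ℝ) (α : ℝ) : Prop :=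
  ∀ f ∈ AMatSet M α, ∀ U : Set ℂ, IsOpen U → closure (f '' Sector α) ⊆ U →
    ∀ g ∈ HMatClass M U, g ∘ f ∈ AMatSet M α

/-- Closedness under composition for a single-sequence class. -/
def CompClosedSeq (N : ℕ → ℝ) (α : ℝ) : Prop :=
  ∀ f ∈ ASet N α, ∀ U : Set ℂ, IsOpen U → closure (f '' Sector α) ⊆ U →
    ∀ g ∈ HSeqClass N U, g ∘ f ∈ ASet N α

/-- `f` is characteristic in `A_{{L}}(S_α)`. -/
def Characteristic (L : ℕ → ℝ) (α : ℝ) (f : ℂ → ℂ) : Prop :=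
  f ∈ ASet L α ∧ ∀ N : ℕ → ℝ, (∀ j, 0 < N j) → N 0 = 1 →
    f ∈ ASet N α → ASet N α ⊆ ASet L α → ASet N α = ASet L α

/-- Coefficient `2^{-n} M_n/m_n^n` of the `T_M`-transform. -/
def coefT (M : ℕ → ℝ) (n : ℕ) : ℝ := (1/2:ℝ)^n * (M n / (M (n+1) / M n) ^ n)

/-- The sequence of quotients `m_n = M_{n+1}/M_n`. -/
def quotSeq (M : ℕ → ℝ) (n : ℕ) : ℝ := M (n+1) / M n

/-- `R_j = ∑ 2^{-n}(M_n/m_n^n) m_n^j` (as a real tsum). -/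
def Rseq (M : ℕ → ℝ) (j : ℕ) : ℝ := ∑' n : ℕ, coefT M n * (quotSeq M n) ^ j

/-- The `T_M`-transform. -/
def Ttrans (M : ℕ → ℝ) (f : ℂ → ℂ) (z : ℂ) : ℂ :=
  ∑' n : ℕ, (coefT M n : ℂ) * f ((quotSeq M n : ℂ) * z)

/-- Weight function: continuous, nondecreasing, `ω(0)=0`, nonnegative, `ω(t)→∞`. -/
def IsWeightFunction (ω : ℝ → ℝ) : Prop :=
  ContinuousOn ω (Set.Ici 0) ∧ MonotoneOn ω (Set.Ici 0) ∧ ω 0 = 0 ∧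
    (∀ t ≥ (0:ℝ), 0 ≤ ω t) ∧ Filter.Tendsto ω Filter.atTop Filter.atTop

def Om0 (ω : ℝ → ℝ) : Prop := ∀ t ∈ Set.Icc (0:ℝ) 1, ω t = 0
def Om1 (ω : ℝ → ℝ) : Prop := ∃ L ≥ (1:ℝ), ∀ t ≥ (0:ℝ), ω (2*t) ≤ L * (ω t + 1)
def Om2 (ω : ℝ → ℝ) : Prop := ∃ C > (0:ℝ), ∃ t₀ : ℝ, ∀ t ≥ t₀, ω t ≤ C * t
def Om3 (ω : ℝ → ℝ) : Prop := Real.log =o[Filter.atTop] ω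
def Om4 (ω : ℝ → ℝ) : Prop := ConvexOn ℝ Set.univ (fun t => ω (Real.exp t))
def Om5 (ω : ℝ → ℝ) : Prop := ω =o[Filter.atTop] (fun t => t)
def Om6 (ω : ℝ → ℝ) : Prop := ∃ H ≥ (1:ℝ), ∀ t ≥ (0:ℝ), 2 * ω t ≤ ω (H * t) + H

/-- Condition `(α₀)` for a weight function. -/
def Alpha0 (ω : ℝ → ℝ) : Prop :=
  ∃ C ≥ (1:ℝ), ∃ t₀ ≥ (0:ℝ), ∀ lam ≥ (1:ℝ), ∀ t ≥ t₀, ω (lam * t) ≤ C * lam * ω t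

/-- The set `W₀`. -/
def InW0 (ω : ℝ → ℝ) : Prop := IsWeightFunction ω ∧ Om0 ω ∧ Om3 ω ∧ Om4 ω

/-- The set `W`. -/
def InW (ω : ℝ → ℝ) : Prop := InW0 ω ∧ Om1 ω

/-- The Legendre–Fenchel–Young conjugate `φ*_ω`. -/
def phiStar (ω : ℝ → ℝ) (x : ℝ) : ℝ :=
  sSup {r : ℝ | ∃ y : ℝ, 0 ≤ y ∧ r = x * y - ω (Real.exp y)}

/-- The weight matrix associated with `ω`: `W^{(ℓ)}_j = exp((1/ℓ)·φ*_ω(ℓj))`. -/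
def Wmat (ω : ℝ → ℝ) (ℓ : ℝ) (j : ℕ) : ℝ := Real.exp ((1/ℓ) * phiStar ω (ℓ * (j:ℝ)))

/-- The class `A_{{ω}}(S_α)`. -/
def AOmegaSet (ω : ℝ → ℝ) (α : ℝ) : Set (ℂ → ℂ) :=
  {f | DifferentiableOn ℂ f (Sector α) ∧ ∃ ℓ > (0:ℝ), ∃ C : ℝ,
    ∀ j : ℕ, ∀ z ∈ Sector α, ‖iteratedDerivWithin j f (Sector α) z‖ ≤ C * Wmat ω ℓ j}

/-- Closedness under composition for the `ω`-class. -/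
def CompClosedOmega (ω : ℝ → ℝ) (α : ℝ) : Prop :=
  ∀ f ∈ AOmegaSet ω α, ∀ U : Set ℂ, IsOpen U → closure (f '' Sector α) ⊆ U →
    ∀ g ∈ HMatClass (Wmat ω) U, g ∘ f ∈ AOmegaSet ω α

/-- One-sided matrix comparison `𝓜 {⪯} 𝓛`: `sup_{j≥1}(M^{(p)}_j/L^{(q)}_j)^{1/j} < ∞`. -/
def MatPreceq (M L : ℝ → ℕ → ℝ) : Prop :=
  ∀ p > (0:ℝ), ∃ q > (0:ℝ), ∃ C : ℝ, ∀ j : ℕ, 1 ≤ j → (M p j / L q j) ^ ((j:ℝ)⁻¹) ≤ C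

/-- `R`-equivalence of weight matrices. -/
def REquivMat (M L : ℝ → ℕ → ℝ) : Prop := MatPreceq M L ∧ MatPreceq L M

namespace Stmt15Aux

noncomputable def lineVals (ω : ℝ → ℝ) (s t : ℝ) : Set ℝ :=
  {z | ∃ c m : ℝ, 0 ≤ m ∧ (∀ u ≥ (0:ℝ), ω (u ^ s) ≤ c + m * u) ∧ z = c + m * t}

noncomputable def kap (ω : ℝ → ℝ) (s t : ℝ) : ℝ := sInf (lineVals ω s t)

noncomputable def PhiSet (ω : ℝ → ℝ) (s ℓ x : ℝ) : Set ℝ :=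
  {r | ∃ t : ℝ, 0 < t ∧ r = s * x * Real.log t - kap ω s t / ℓ}

noncomputable def Phi (ω : ℝ → ℝ) (s ℓ x : ℝ) : ℝ := sSup (PhiSet ω s ℓ x)

noncomputable def Umat (ω : ℝ → ℝ) (s ℓ : ℝ) (j : ℕ) : ℝ :=
  Real.exp (kap ω s 0 / ℓ + Phi ω s ℓ (j : ℝ))

noncomputable def ASet2 (ω : ℝ → ℝ) (s ℓ x : ℝ) : Set ℝ :=
  {r | ∃ v : ℝ, 0 < v ∧ r = s * x * Real.log v + s * x - kap ω s (x * v) / ℓ}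

lemma one_le_exp' {x : ℝ} (h : 0 ≤ x) : 1 ≤ Real.exp x := by
  rw [← Real.exp_zero]; exact Real.exp_le_exp.mpr h

section

variable {ω : ℝ → ℝ} {s : ℝ}

lemma lineVals_nonempty
    (Hline : ∃ c m : ℝ, 0 ≤ m ∧ ∀ u ≥ (0:ℝ), ω (u ^ s) ≤ c + m * u) (t : ℝ) :
    (lineVals ω s t).Nonempty := by
  obtain ⟨c, m, hm, hmaj⟩ := Hline
  exact ⟨c + m * t, c, m, hm, hmaj, rfl⟩

lemma lineVals_lb (Hnn : ∀ t ≥ (0:ℝ), 0 ≤ ω (t ^ s)) {t : ℝ} (ht : 0 ≤ t) :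
    ∀ z ∈ lineVals ω s t, ω (t ^ s) ≤ z := by
  rintro z ⟨c, m, hm, hmaj, rfl⟩
  exact hmaj t ht

lemma bddBelow_lineVals (Hnn : ∀ t ≥ (0:ℝ), 0 ≤ ω (t ^ s)) {t : ℝ} (ht : 0 ≤ t) :
    BddBelow (lineVals ω s t) :=
  ⟨ω (t ^ s), fun z hz => lineVals_lb Hnn ht z hz⟩

lemma sigma_le_kap (Hline : ∃ c m : ℝ, 0 ≤ m ∧ ∀ u ≥ (0:ℝ), ω (u ^ s) ≤ c + m * u)
    (Hnn : ∀ t ≥ (0:ℝ), 0 ≤ ω (t ^ s)) {t : ℝ} (ht : 0 ≤ t) :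
    ω (t ^ s) ≤ kap ω s t :=
  le_csInf (lineVals_nonempty Hline t) (lineVals_lb Hnn ht)

lemma kap_nonneg (Hline : ∃ c m : ℝ, 0 ≤ m ∧ ∀ u ≥ (0:ℝ), ω (u ^ s) ≤ c + m * u)
    (Hnn : ∀ t ≥ (0:ℝ), 0 ≤ ω (t ^ s)) {t : ℝ} (ht : 0 ≤ t) : 0 ≤ kap ω s t :=
  (Hnn t ht).trans (sigma_le_kap Hline Hnn ht)

lemma kap_le (Hnn : ∀ t ≥ (0:ℝ), 0 ≤ ω (t ^ s)) {c m : ℝ} (hm : 0 ≤ m)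
    (hmaj : ∀ u ≥ (0:ℝ), ω (u ^ s) ≤ c + m * u) {t : ℝ} (ht : 0 ≤ t) :
    kap ω s t ≤ c + m * t :=
  csInf_le (bddBelow_lineVals Hnn ht) ⟨c, m, hm, hmaj, rfl⟩

lemma kap_mono (Hline : ∃ c m : ℝ, 0 ≤ m ∧ ∀ u ≥ (0:ℝ), ω (u ^ s) ≤ c + m * u)
    (Hnn : ∀ t ≥ (0:ℝ), 0 ≤ ω (t ^ s)) {a b : ℝ} (ha : 0 ≤ a) (hab : a ≤ b) :
    kap ω s a ≤ kap ω s b := by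
  apply le_csInf (lineVals_nonempty Hline b)
  rintro z ⟨c, m, hm, hmaj, rfl⟩
  have h1 := kap_le Hnn hm hmaj ha
  nlinarith

lemma kap_concave (Hline : ∃ c m : ℝ, 0 ≤ m ∧ ∀ u ≥ (0:ℝ), ω (u ^ s) ≤ c + m * u)
    (Hnn : ∀ t ≥ (0:ℝ), 0 ≤ ω (t ^ s)) {a b : ℝ} (ha : 0 ≤ a) (hb : 0 ≤ b) :
    kap ω s a + kap ω s b ≤ 2 * kap ω s ((a + b) / 2) := by
  have h : (kap ω s a + kap ω s b) / 2 ≤ kap ω s ((a + b) / 2) := by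
    apply le_csInf (lineVals_nonempty Hline _)
    rintro z ⟨c, m, hm, hmaj, rfl⟩
    have h1 := kap_le Hnn hm hmaj ha
    have h2 := kap_le Hnn hm hmaj hb
    linarith
  linarith

lemma kap_near_zero (Hline : ∃ c m : ℝ, 0 ≤ m ∧ ∀ u ≥ (0:ℝ), ω (u ^ s) ≤ c + m * u)
    (Hnn : ∀ t ≥ (0:ℝ), 0 ≤ ω (t ^ s)) {ε : ℝ} (hε : 0 < ε) :
    ∃ t : ℝ, 0 < t ∧ kap ω s t < kap ω s 0 + ε := by
  have h0 : sInf (lineVals ω s 0) < kap ω s 0 + ε / 2 := by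
    have : kap ω s 0 < kap ω s 0 + ε / 2 := by linarith
    exact this
  obtain ⟨z, hzmem, hlt⟩ := exists_lt_of_csInf_lt (lineVals_nonempty Hline 0) h0
  obtain ⟨c, m, hm, hmaj, rfl⟩ := hzmem
  have hmp : (0:ℝ) < m + 1 := by linarith
  refine ⟨ε / 2 / (m + 1), by positivity, ?_⟩
  have h1 : kap ω s (ε / 2 / (m + 1)) ≤ c + m * (ε / 2 / (m + 1)) :=
    kap_le Hnn hm hmaj (by positivity)
  have h2 : m * (ε / 2 / (m + 1)) ≤ ε / 2 := by
    rw [show m * (ε / 2 / (m + 1)) = m / (m + 1) * (ε / 2) by ring]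
    have hle : m / (m + 1) ≤ 1 := by rw [div_le_one hmp]; linarith
    nlinarith
  have h3 : c + m * 0 < kap ω s 0 + ε / 2 := hlt
  simp only [mul_zero, add_zero] at h3
  linarith

lemma key_bound {ω : ℝ → ℝ} (h3 : Om3 ω) (hnn : ∀ t ≥ (0:ℝ), 0 ≤ ω t)
    {a b : ℝ} (ha : 0 ≤ a) (hb : 0 < b) :
    ∃ B : ℝ, 0 ≤ B ∧ ∀ u : ℝ, 0 < u → a * Real.log u - ω u / b ≤ B := by
  have hc : (0:ℝ) < 1 / (b * (a + 1)) := by positivity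
  have hev := Asymptotics.isLittleO_iff.mp h3 hc
  rw [Filter.eventually_atTop] at hev
  obtain ⟨T, hT⟩ := hev
  set T' := max T 1 with hT'def
  have hT'1 : (1:ℝ) ≤ T' := le_max_right T 1
  have hB0 : 0 ≤ a * Real.log T' := mul_nonneg ha (Real.log_nonneg hT'1)
  refine ⟨a * Real.log T', hB0, ?_⟩
  intro u hu
  by_cases hcase : u ≤ T'
  · have hlog : Real.log u ≤ Real.log T' := Real.log_le_log hu hcase
    have h1 : a * Real.log u ≤ a * Real.log T' := mul_le_mul_of_nonneg_left hlog ha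
    have h2 : 0 ≤ ω u / b := div_nonneg (hnn u hu.le) hb.le
    linarith
  · push_neg at hcase
    have hu1 : (1:ℝ) ≤ u := le_trans hT'1 hcase.le
    have hTu : T ≤ u := le_trans (le_max_left T 1) hcase.le
    have hbd := hT u hTu
    rw [Real.norm_eq_abs, Real.norm_eq_abs, _root_.abs_of_nonneg (Real.log_nonneg hu1),
        _root_.abs_of_nonneg (hnn u (by linarith))] at hbd
    have hω0 : 0 ≤ ω u := hnn u (by linarith)
    have hkey : a * (1 / (b * (a + 1))) ≤ 1 / b := by
      rw [mul_one_div, div_le_div_iff₀ (by positivity) hb]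
      nlinarith
    have h1 := mul_le_mul_of_nonneg_left hbd ha
    rw [← mul_assoc] at h1
    have h2 : a * (1 / (b * (a + 1))) * ω u ≤ (1 / b) * ω u :=
      mul_le_mul_of_nonneg_right hkey hω0
    have h3 : (1 / b) * ω u = ω u / b := by ring
    linarith

end

end Stmt15Aux

open Stmt15Aux

set_option maxHeartbeats 1600000

/-- if for some `s > 0` the weight `ω^s(t) = ω(t^s)` has `(ω₅)` and `(α₀)`,
then there is a weight matrix `𝓤`, `R`-equivalent to `𝓜_ω`, such that each
`(j^{-sj}·U^{(ℓ)}_j)_j` is equivalent to a log-convex sequence. -/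
theorem stmt_15 (ω : ℝ → ℝ) (hω : InW0 ω) (s : ℝ) (hs : 0 < s)
    (h5 : Om5 (fun t => ω (t ^ s)))
    (hα0 : Alpha0 (fun t => ω (t ^ s))) :
    ∃ U : ℝ → ℕ → ℝ, IsWeightMatrix U ∧ REquivMat U (Wmat ω) ∧
      ∀ ℓ > (0:ℝ), ∃ L : ℕ → ℝ, (∀ j, 0 < L j) ∧ IsLogConvexSeq L ∧
        SeqEquiv (fun j => Gbar (-s) j * U ℓ j) L := by
  classical
  obtain ⟨⟨hcont, hmono, hw0, hnn, htend⟩, h0, h3, h4⟩ := hω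
  obtain ⟨C, hC1, t₀, ht₀0, hα⟩ := hα0
  have hC0 : (0:ℝ) < C := lt_of_lt_of_le one_pos hC1
  set t₁ : ℝ := max t₀ 2 with ht₁def
  have ht₁2 : (2:ℝ) ≤ t₁ := le_max_right _ _
  have ht₁0 : (0:ℝ) < t₁ := by linarith
  have ht₁t₀ : t₀ ≤ t₁ := le_max_left _ _
  have Hnn : ∀ t ≥ (0:ℝ), 0 ≤ ω (t ^ s) := fun t ht => hnn _ (Real.rpow_nonneg ht s)
  have Hmono : ∀ a b : ℝ, 0 ≤ a → a ≤ b → ω (a ^ s) ≤ ω (b ^ s) := by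
    intro a b ha hab
    exact hmono (Set.mem_Ici.mpr (Real.rpow_nonneg ha s))
      (Set.mem_Ici.mpr (Real.rpow_nonneg (ha.trans hab) s))
      (Real.rpow_le_rpow ha hab hs.le)
  -- the affine majorant lines of σ(t) = ω(t^s)
  have hmaj : ∀ t : ℝ, t₁ ≤ t → ∀ u : ℝ, u ≥ (0:ℝ) →
      ω (u ^ s) ≤ ω (t ^ s) + C * ω (t ^ s) / t * u := by
    intro t ht u hu
    have ht0 : (0:ℝ) < t := lt_of_lt_of_le ht₁0 ht
    by_cases hcase : u ≤ t
    · have h1 : ω (u ^ s) ≤ ω (t ^ s) := Hmono u t hu hcase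
      have h2 : 0 ≤ C * ω (t ^ s) / t * u :=
        mul_nonneg (div_nonneg (mul_nonneg hC0.le (Hnn t ht0.le)) ht0.le) hu
      linarith
    · push_neg at hcase
      have hlam : (1:ℝ) ≤ u / t := (one_le_div ht0).mpr hcase.le
      have halpha : ω ((u / t * t) ^ s) ≤ C * (u / t) * ω (t ^ s) :=
        hα (u / t) hlam t (le_trans ht₁t₀ ht)
      rw [div_mul_cancel₀ u (ne_of_gt ht0)] at halpha
      have heq : C * (u / t) * ω (t ^ s) = C * ω (t ^ s) / t * u := by
        field_simp
      rw [heq] at halpha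
      have h2 : 0 ≤ ω (t ^ s) := Hnn t ht0.le
      linarith
  have hmnn : ∀ t : ℝ, t₁ ≤ t → 0 ≤ C * ω (t ^ s) / t := by
    intro t ht
    have ht0 : (0:ℝ) < t := lt_of_lt_of_le ht₁0 ht
    exact div_nonneg (mul_nonneg hC0.le (Hnn t ht0.le)) ht0.le
  have Hline : ∃ c m : ℝ, 0 ≤ m ∧ ∀ u ≥ (0:ℝ), ω (u ^ s) ≤ c + m * u :=
    ⟨ω (t₁ ^ s), C * ω (t₁ ^ s) / t₁, hmnn t₁ le_rfl, fun u hu => hmaj t₁ le_rfl u hu⟩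
  -- κ is comparable to σ on [t₁, ∞)
  have Hku : ∀ t : ℝ, t₁ ≤ t → kap ω s t ≤ (1 + C) * ω (t ^ s) := by
    intro t ht
    have ht0 : (0:ℝ) < t := lt_of_lt_of_le ht₁0 ht
    have h1 := kap_le Hnn (hmnn t ht) (hmaj t ht) ht0.le
    have h2 : C * ω (t ^ s) / t * t = C * ω (t ^ s) := div_mul_cancel₀ _ (ne_of_gt ht0)
    rw [h2] at h1
    linarith
  have kapnn : ∀ t : ℝ, 0 ≤ t → 0 ≤ kap ω s t := fun t ht => kap_nonneg Hline Hnn ht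
  -- PhiSet is nonempty and bounded above
  have HbddPhi : ∀ ℓ : ℝ, 0 < ℓ → ∀ x : ℝ, 0 ≤ x → BddAbove (PhiSet ω s ℓ x) := by
    intro ℓ hℓ x hx
    obtain ⟨B, hB0, hB⟩ := key_bound h3 hnn hx hℓ
    refine ⟨B, ?_⟩
    rintro r ⟨t, ht, rfl⟩
    have h1 : Real.log (t ^ s) = s * Real.log t := Real.log_rpow ht s
    have h2 := hB (t ^ s) (Real.rpow_pos_of_pos ht s)
    rw [h1] at h2
    have h3' : ω (t ^ s) ≤ kap ω s t := sigma_le_kap Hline Hnn ht.le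
    have h4' : ω (t ^ s) / ℓ ≤ kap ω s t / ℓ := (div_le_div_iff_of_pos_right hℓ).mpr h3'
    have h5' : s * x * Real.log t = x * (s * Real.log t) := by ring
    rw [h5']
    linarith
  have HPhine : ∀ ℓ x : ℝ, (PhiSet ω s ℓ x).Nonempty := fun ℓ x =>
    ⟨s * x * Real.log 1 - kap ω s 1 / ℓ, 1, one_pos, rfl⟩
  -- facts about phiStar
  have hω1 : ω 1 = 0 := h0 1 ⟨zero_le_one, le_rfl⟩
  have HbddStar : ∀ x : ℝ, 0 ≤ x →
      BddAbove {r : ℝ | ∃ y : ℝ, 0 ≤ y ∧ r = x * y - ω (Real.exp y)} := by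
    intro x hx
    obtain ⟨B, hB0, hB⟩ := key_bound h3 hnn hx one_pos
    refine ⟨B, ?_⟩
    rintro r ⟨y, hy, rfl⟩
    have h2 := hB (Real.exp y) (Real.exp_pos y)
    rw [Real.log_exp, div_one] at h2
    exact h2
  have hstarne : ∀ x : ℝ, {r : ℝ | ∃ y : ℝ, 0 ≤ y ∧ r = x * y - ω (Real.exp y)}.Nonempty :=
    fun x => ⟨x * 0 - ω (Real.exp 0), 0, le_rfl, rfl⟩
  have hstar0 : ∀ x : ℝ, 0 ≤ x → 0 ≤ phiStar ω x := by
    intro x hx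
    have hmem : (0:ℝ) ∈ {r : ℝ | ∃ y : ℝ, 0 ≤ y ∧ r = x * y - ω (Real.exp y)} :=
      ⟨0, le_rfl, by rw [Real.exp_zero, hω1]; ring⟩
    exact le_csSup (HbddStar x hx) hmem
  -- value of Phi at 0
  have hPhi0 : ∀ ℓ : ℝ, 0 < ℓ → Phi ω s ℓ 0 = -(kap ω s 0 / ℓ) := by
    intro ℓ hℓ
    apply le_antisymm
    · apply csSup_le (HPhine ℓ 0)
      rintro r ⟨t, ht, rfl⟩
      have h1 : kap ω s 0 ≤ kap ω s t := kap_mono Hline Hnn le_rfl ht.le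
      have h2 : kap ω s 0 / ℓ ≤ kap ω s t / ℓ := (div_le_div_iff_of_pos_right hℓ).mpr h1
      have h3' : s * 0 * Real.log t = 0 := by ring
      rw [h3']
      linarith
    · apply le_of_forall_pos_le_add
      intro ε hε
      obtain ⟨t, ht, hkt⟩ := kap_near_zero Hline Hnn (mul_pos hε hℓ)
      have hmem : s * 0 * Real.log t - kap ω s t / ℓ ∈ PhiSet ω s ℓ 0 := ⟨t, ht, rfl⟩
      have h1 : s * 0 * Real.log t - kap ω s t / ℓ ≤ Phi ω s ℓ 0 :=
        le_csSup (HbddPhi ℓ hℓ 0 le_rfl) hmem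
      have h4 : kap ω s t / ℓ < (kap ω s 0 + ε * ℓ) / ℓ := (div_lt_div_iff_of_pos_right hℓ).mpr hkt
      have h5 : (kap ω s 0 + ε * ℓ) / ℓ = kap ω s 0 / ℓ + ε := by field_simp
      have h6 : s * 0 * Real.log t = 0 := by ring
      rw [h6] at h1
      linarith
  -- U is a weight matrix
  have hU0 : ∀ p > (0:ℝ), Umat ω s p 0 = 1 := by
    intro p hp
    simp only [Umat, Nat.cast_zero]
    rw [hPhi0 p hp, show kap ω s 0 / p + -(kap ω s 0 / p) = 0 by ring, Real.exp_zero]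
  have hUmono : ∀ p q : ℝ, 0 < p → p ≤ q → ∀ j : ℕ, Umat ω s p j ≤ Umat ω s q j := by
    intro p q hp hpq j
    have hq : 0 < q := lt_of_lt_of_le hp hpq
    simp only [Umat]
    rw [Real.exp_le_exp]
    have hkey : Phi ω s p (j:ℝ) ≤ kap ω s 0 / q - kap ω s 0 / p + Phi ω s q (j:ℝ) := by
      apply csSup_le (HPhine p (j:ℝ))
      rintro r ⟨t, ht, rfl⟩
      have h1 : kap ω s 0 ≤ kap ω s t := kap_mono Hline Hnn le_rfl ht.le
      have h2 : (kap ω s 0 - kap ω s t) * (1 / p) ≤ (kap ω s 0 - kap ω s t) * (1 / q) :=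
        mul_le_mul_of_nonpos_left (one_div_le_one_div_of_le hp hpq) (by linarith)
      have h3' : s * (j:ℝ) * Real.log t - kap ω s t / q ≤ Phi ω s q (j:ℝ) :=
        le_csSup (HbddPhi q hq (j:ℝ) (Nat.cast_nonneg j)) ⟨t, ht, rfl⟩
      have e1 : (kap ω s 0 - kap ω s t) * (1 / p) = kap ω s 0 / p - kap ω s t / p := by
        field_simp
      have e2 : (kap ω s 0 - kap ω s t) * (1 / q) = kap ω s 0 / q - kap ω s t / q := by
        field_simp
      rw [e1, e2] at h2
      linarith
    linarith
  -- U ⪯ W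
  have hMPUW : MatPreceq (Umat ω s) (Wmat ω) := by
    intro p hp
    refine ⟨p, hp, Real.exp (kap ω s 0 / p), ?_⟩
    intro j hj
    have hPhile : Phi ω s p (j:ℝ) ≤ 1 / p * phiStar ω (p * (j:ℝ)) := by
      apply csSup_le (HPhine p (j:ℝ))
      rintro r ⟨t, ht, rfl⟩
      by_cases h1t : 1 ≤ t
      · have hy : 0 ≤ s * Real.log t := mul_nonneg hs.le (Real.log_nonneg h1t)
        have hle : p * (j:ℝ) * (s * Real.log t) - ω (Real.exp (s * Real.log t)) ≤
            phiStar ω (p * (j:ℝ)) :=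
          le_csSup (HbddStar _ (by positivity)) ⟨s * Real.log t, hy, rfl⟩
        have hexp : Real.exp (s * Real.log t) = t ^ s := by
          rw [Real.rpow_def_of_pos ht, mul_comm]
        rw [hexp] at hle
        have hκ : ω (t ^ s) ≤ kap ω s t := sigma_le_kap Hline Hnn ht.le
        have hκd : ω (t ^ s) / p ≤ kap ω s t / p := (div_le_div_iff_of_pos_right hp).mpr hκ
        have e : 1 / p * (p * (j:ℝ) * (s * Real.log t) - ω (t ^ s)) =
            s * (j:ℝ) * Real.log t - ω (t ^ s) / p := by
          field_simp
        have h3' : 1 / p * (p * (j:ℝ) * (s * Real.log t) - ω (t ^ s)) ≤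
            1 / p * phiStar ω (p * (j:ℝ)) :=
          mul_le_mul_of_nonneg_left hle (by positivity)
        rw [e] at h3'
        linarith
      · push_neg at h1t
        have hlog : Real.log t ≤ 0 := Real.log_nonpos ht.le h1t.le
        have h2 : s * (j:ℝ) * Real.log t ≤ 0 :=
          mul_nonpos_of_nonneg_of_nonpos (by positivity) hlog
        have h3' : 0 ≤ kap ω s t / p := div_nonneg (kapnn t ht.le) hp.le
        have h4' : 0 ≤ 1 / p * phiStar ω (p * (j:ℝ)) :=
          mul_nonneg (by positivity) (hstar0 _ (by positivity))
        linarith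
    have hWpos : 0 < Wmat ω p j := Real.exp_pos _
    have hUpos : 0 < Umat ω s p j := Real.exp_pos _
    have hUW : Umat ω s p j ≤ Real.exp (kap ω s 0 / p) * Wmat ω p j := by
      simp only [Umat, Wmat]
      rw [← Real.exp_add, Real.exp_le_exp]
      linarith
    have hc1 : (1:ℝ) ≤ Real.exp (kap ω s 0 / p) :=
      one_le_exp' (div_nonneg (kapnn 0 le_rfl) hp.le)
    have hratio : Umat ω s p j / Wmat ω p j ≤ Real.exp (kap ω s 0 / p) :=
      (div_le_iff₀ hWpos).mpr hUW
    have h0r : 0 ≤ Umat ω s p j / Wmat ω p j := le_of_lt (div_pos hUpos hWpos)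
    have hjR : (1:ℝ) ≤ (j:ℝ) := by exact_mod_cast hj
    calc (Umat ω s p j / Wmat ω p j) ^ ((j:ℝ)⁻¹)
        ≤ (Real.exp (kap ω s 0 / p)) ^ ((j:ℝ)⁻¹) :=
          Real.rpow_le_rpow h0r hratio (by positivity)
      _ ≤ (Real.exp (kap ω s 0 / p)) ^ (1:ℝ) :=
          Real.rpow_le_rpow_of_exponent_le hc1 (by
            rw [show (1:ℝ) = 1⁻¹ by norm_num]
            exact inv_anti₀ one_pos hjR)
      _ = Real.exp (kap ω s 0 / p) := Real.rpow_one _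
  -- W ⪯ U
  have hMPWU : MatPreceq (Wmat ω) (Umat ω s) := by
    intro p hp
    have hq : (0:ℝ) < (1 + C) * p := by positivity
    refine ⟨(1 + C) * p, hq, Real.exp ((kap ω s t₁ - kap ω s 0) / ((1 + C) * p)), ?_⟩
    intro j hj
    set q := (1 + C) * p with hqdef
    have hPhit₁ : s * (j:ℝ) * Real.log t₁ - kap ω s t₁ / q ≤ Phi ω s q (j:ℝ) :=
      le_csSup (HbddPhi q hq (j:ℝ) (Nat.cast_nonneg j)) ⟨t₁, ht₁0, rfl⟩
    have hκt₁nn : 0 ≤ kap ω s t₁ / q := div_nonneg (kapnn t₁ ht₁0.le) hq.le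
    have hstarle : phiStar ω (p * (j:ℝ)) ≤ p * (Phi ω s q (j:ℝ) + kap ω s t₁ / q) := by
      apply csSup_le (hstarne (p * (j:ℝ)))
      rintro r ⟨y, hy, rfl⟩
      set t := Real.exp (y / s) with htdef
      have ht : 0 < t := Real.exp_pos _
      have hlogt : Real.log t = y / s := Real.log_exp _
      have hts : t ^ s = Real.exp y := by
        rw [Real.rpow_def_of_pos ht, hlogt, div_mul_cancel₀ _ (ne_of_gt hs)]
      have hye : y = s * Real.log t := by rw [hlogt]; field_simp
      by_cases hcase : t₁ ≤ t
      · have hh := Hku t hcase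
        have hσ : kap ω s t / (1 + C) ≤ ω (t ^ s) := by
          rw [div_le_iff₀ (by linarith : (0:ℝ) < 1 + C)]
          linarith
        have hmemq : s * (j:ℝ) * Real.log t - kap ω s t / q ≤ Phi ω s q (j:ℝ) :=
          le_csSup (HbddPhi q hq (j:ℝ) (Nat.cast_nonneg j)) ⟨t, ht, rfl⟩
        have e1 : p * (j:ℝ) * y = p * (s * (j:ℝ) * Real.log t) := by rw [hye]; ring
        have e2 : kap ω s t / (1 + C) = p * (kap ω s t / q) := by
          have h1C : (0:ℝ) < 1 + C := by linarith
          rw [hqdef]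
          field_simp
        have h5' : ω (Real.exp y) = ω (t ^ s) := by rw [hts]
        have h6 : p * (j:ℝ) * y - ω (Real.exp y) ≤
            p * (s * (j:ℝ) * Real.log t - kap ω s t / q) := by
          rw [h5', e1, mul_sub]
          have h7 := hσ
          rw [e2] at h7
          linarith
        have h7 : p * (s * (j:ℝ) * Real.log t - kap ω s t / q) ≤ p * Phi ω s q (j:ℝ) :=
          mul_le_mul_of_nonneg_left hmemq hp.le
        have h8 : p * Phi ω s q (j:ℝ) ≤ p * (Phi ω s q (j:ℝ) + kap ω s t₁ / q) := by
          nlinarith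
        linarith
      · push_neg at hcase
        have hy2 : y ≤ s * Real.log t₁ := by
          rw [hye]
          have hll : Real.log t ≤ Real.log t₁ := Real.log_le_log ht hcase.le
          nlinarith
        have hωnn : 0 ≤ ω (Real.exp y) := hnn _ (Real.exp_pos y).le
        have h7 : p * (j:ℝ) * y ≤ p * (j:ℝ) * (s * Real.log t₁) :=
          mul_le_mul_of_nonneg_left hy2 (by positivity)
        have e : p * (j:ℝ) * (s * Real.log t₁) = p * (s * (j:ℝ) * Real.log t₁) := by ring
        have h8 : s * (j:ℝ) * Real.log t₁ ≤ Phi ω s q (j:ℝ) + kap ω s t₁ / q := by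
          linarith
        have h9 : p * (s * (j:ℝ) * Real.log t₁) ≤ p * (Phi ω s q (j:ℝ) + kap ω s t₁ / q) :=
          mul_le_mul_of_nonneg_left h8 hp.le
        linarith
    have hWU : Wmat ω p j ≤
        Real.exp ((kap ω s t₁ - kap ω s 0) / q) * Umat ω s q j := by
      simp only [Wmat, Umat]
      rw [← Real.exp_add, Real.exp_le_exp]
      have h1 : 1 / p * phiStar ω (p * (j:ℝ)) ≤ Phi ω s q (j:ℝ) + kap ω s t₁ / q := by
        have h2 := mul_le_mul_of_nonneg_left hstarle (by positivity : (0:ℝ) ≤ 1 / p)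
        have e : 1 / p * (p * (Phi ω s q (j:ℝ) + kap ω s t₁ / q)) =
            Phi ω s q (j:ℝ) + kap ω s t₁ / q := by field_simp
        rw [e] at h2
        exact h2
      have h2 : (kap ω s t₁ - kap ω s 0) / q + (kap ω s 0 / q + Phi ω s q (j:ℝ)) =
          Phi ω s q (j:ℝ) + kap ω s t₁ / q := by ring
      rw [h2]
      exact h1
    have hWpos : 0 < Wmat ω p j := Real.exp_pos _
    have hUpos : 0 < Umat ω s q j := Real.exp_pos _
    have hc1 : (1:ℝ) ≤ Real.exp ((kap ω s t₁ - kap ω s 0) / q) := by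
      apply one_le_exp'
      have hm0 := kap_mono (ω := ω) (s := s) Hline Hnn (le_refl (0:ℝ)) ht₁0.le
      exact div_nonneg (by linarith) hq.le
    have hratio : Wmat ω p j / Umat ω s q j ≤ Real.exp ((kap ω s t₁ - kap ω s 0) / q) :=
      (div_le_iff₀ hUpos).mpr (by linarith [hWU])
    have h0r : 0 ≤ Wmat ω p j / Umat ω s q j := le_of_lt (div_pos hWpos hUpos)
    have hjR : (1:ℝ) ≤ (j:ℝ) := by exact_mod_cast hj
    calc (Wmat ω p j / Umat ω s q j) ^ ((j:ℝ)⁻¹)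
        ≤ (Real.exp ((kap ω s t₁ - kap ω s 0) / q)) ^ ((j:ℝ)⁻¹) :=
          Real.rpow_le_rpow h0r hratio (by positivity)
      _ ≤ (Real.exp ((kap ω s t₁ - kap ω s 0) / q)) ^ (1:ℝ) :=
          Real.rpow_le_rpow_of_exponent_le hc1 (by
            rw [show (1:ℝ) = 1⁻¹ by norm_num]
            exact inv_anti₀ one_pos hjR)
      _ = Real.exp ((kap ω s t₁ - kap ω s 0) / q) := Real.rpow_one _
  refine ⟨Umat ω s, ⟨fun p _ j => Real.exp_pos _, hU0, hUmono⟩, ⟨hMPUW, hMPWU⟩, ?_⟩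
  -- the log-convexity part
  intro ℓ hℓ
  have hGbar : ∀ j : ℕ, Gbar (-s) j = Real.exp (Real.log ((j:ℕ):ℝ) * (-s * ((j:ℕ):ℝ))) := by
    intro j
    cases j with
    | zero => simp [Gbar]
    | succ n =>
        have hpos : (0:ℝ) < (((n+1:ℕ)):ℝ) := by positivity
        rw [Gbar, Real.rpow_def_of_pos hpos]
  have hLexp : ∀ j : ℕ, Gbar (-s) j * Umat ω s ℓ j =
      Real.exp (Real.log ((j:ℕ):ℝ) * (-s * ((j:ℕ):ℝ)) +
        (kap ω s 0 / ℓ + Phi ω s ℓ ((j:ℕ):ℝ))) := by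
    intro j
    rw [hGbar j]
    simp only [Umat]
    rw [← Real.exp_add]
  have hAne : ∀ x : ℝ, (ASet2 ω s ℓ x).Nonempty := fun x =>
    ⟨s * x * Real.log 1 + s * x - kap ω s (x * 1) / ℓ, 1, one_pos, rfl⟩
  have hAbdd : ∀ j : ℕ, BddAbove (ASet2 ω s ℓ ((j:ℕ):ℝ)) := by
    intro j
    rcases Nat.eq_zero_or_pos j with hj0 | hjpos
    · subst hj0
      refine ⟨-(kap ω s 0 / ℓ), ?_⟩
      rintro r ⟨v, hv, rfl⟩
      simp
    · obtain ⟨B, hB⟩ := HbddPhi ℓ hℓ ((j:ℕ):ℝ) (Nat.cast_nonneg j)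
      have hjR : (0:ℝ) < ((j:ℕ):ℝ) := by exact_mod_cast hjpos
      refine ⟨B - s * ((j:ℕ):ℝ) * Real.log ((j:ℕ):ℝ) + s * ((j:ℕ):ℝ), ?_⟩
      rintro r ⟨v, hv, rfl⟩
      have hmem : s * ((j:ℕ):ℝ) * Real.log (((j:ℕ):ℝ) * v) - kap ω s (((j:ℕ):ℝ) * v) / ℓ ∈
          PhiSet ω s ℓ ((j:ℕ):ℝ) := ⟨((j:ℕ):ℝ) * v, mul_pos hjR hv, rfl⟩
      have h1 := hB hmem
      have hlog : Real.log (((j:ℕ):ℝ) * v) = Real.log ((j:ℕ):ℝ) + Real.log v :=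
        Real.log_mul (ne_of_gt hjR) (ne_of_gt hv)
      rw [hlog, mul_add] at h1
      linarith
  have hS : ∀ j : ℕ, 1 ≤ j → sSup (ASet2 ω s ℓ ((j:ℕ):ℝ)) =
      Phi ω s ℓ ((j:ℕ):ℝ) - s * ((j:ℕ):ℝ) * Real.log ((j:ℕ):ℝ) + s * ((j:ℕ):ℝ) := by
    intro j hj
    have hjR : (0:ℝ) < ((j:ℕ):ℝ) := by exact_mod_cast hj
    apply le_antisymm
    · apply csSup_le (hAne ((j:ℕ):ℝ))
      rintro r ⟨v, hv, rfl⟩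
      have hmem : s * ((j:ℕ):ℝ) * Real.log (((j:ℕ):ℝ) * v) - kap ω s (((j:ℕ):ℝ) * v) / ℓ ∈
          PhiSet ω s ℓ ((j:ℕ):ℝ) := ⟨((j:ℕ):ℝ) * v, mul_pos hjR hv, rfl⟩
      have h1 : s * ((j:ℕ):ℝ) * Real.log (((j:ℕ):ℝ) * v) - kap ω s (((j:ℕ):ℝ) * v) / ℓ ≤
          Phi ω s ℓ ((j:ℕ):ℝ) := le_csSup (HbddPhi ℓ hℓ ((j:ℕ):ℝ) hjR.le) hmem
      have hlog : Real.log (((j:ℕ):ℝ) * v) = Real.log ((j:ℕ):ℝ) + Real.log v :=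
        Real.log_mul (ne_of_gt hjR) (ne_of_gt hv)
      rw [hlog, mul_add] at h1
      linarith
    · have h2 : Phi ω s ℓ ((j:ℕ):ℝ) ≤ sSup (ASet2 ω s ℓ ((j:ℕ):ℝ)) +
          s * ((j:ℕ):ℝ) * Real.log ((j:ℕ):ℝ) - s * ((j:ℕ):ℝ) := by
        apply csSup_le (HPhine ℓ ((j:ℕ):ℝ))
        rintro r ⟨t, ht, rfl⟩
        have hvpos : 0 < t / ((j:ℕ):ℝ) := div_pos ht hjR
        have hmem : s * ((j:ℕ):ℝ) * Real.log (t / ((j:ℕ):ℝ)) + s * ((j:ℕ):ℝ) -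
            kap ω s (((j:ℕ):ℝ) * (t / ((j:ℕ):ℝ))) / ℓ ∈ ASet2 ω s ℓ ((j:ℕ):ℝ) :=
          ⟨t / ((j:ℕ):ℝ), hvpos, rfl⟩
        have h3' := le_csSup (hAbdd j) hmem
        have he : ((j:ℕ):ℝ) * (t / ((j:ℕ):ℝ)) = t := by field_simp
        rw [he] at h3'
        have hlog : Real.log (t / ((j:ℕ):ℝ)) = Real.log t - Real.log ((j:ℕ):ℝ) :=
          Real.log_div (ne_of_gt ht) (ne_of_gt hjR)
        rw [hlog, mul_sub] at h3'
        linarith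
      linarith
  have hmid : ∀ j : ℕ, 2 * sSup (ASet2 ω s ℓ (((j+1:ℕ)):ℝ)) ≤
      sSup (ASet2 ω s ℓ ((j:ℕ):ℝ)) + sSup (ASet2 ω s ℓ (((j+2:ℕ)):ℝ)) := by
    intro j
    have hhalf : sSup (ASet2 ω s ℓ (((j+1:ℕ)):ℝ)) ≤
        (sSup (ASet2 ω s ℓ ((j:ℕ):ℝ)) + sSup (ASet2 ω s ℓ (((j+2:ℕ)):ℝ))) / 2 := by
      apply csSup_le (hAne _)
      rintro r ⟨v, hv, rfl⟩
      have h1 : s * ((j:ℕ):ℝ) * Real.log v + s * ((j:ℕ):ℝ) - kap ω s (((j:ℕ):ℝ) * v) / ℓ ≤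
          sSup (ASet2 ω s ℓ ((j:ℕ):ℝ)) := le_csSup (hAbdd j) ⟨v, hv, rfl⟩
      have h2 : s * (((j+2:ℕ)):ℝ) * Real.log v + s * (((j+2:ℕ)):ℝ) -
          kap ω s ((((j+2:ℕ)):ℝ) * v) / ℓ ≤ sSup (ASet2 ω s ℓ (((j+2:ℕ)):ℝ)) :=
        le_csSup (hAbdd (j+2)) ⟨v, hv, rfl⟩
      have hcast1 : (((j+1:ℕ)):ℝ) = ((j:ℕ):ℝ) + 1 := by push_cast; ring
      have hcast2 : (((j+2:ℕ)):ℝ) = ((j:ℕ):ℝ) + 2 := by push_cast; ring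
      have hkc : kap ω s (((j:ℕ):ℝ) * v) + kap ω s ((((j:ℕ):ℝ) + 2) * v) ≤
          2 * kap ω s ((((j:ℕ):ℝ) + 1) * v) := by
        have hc := kap_concave (ω := ω) (s := s) Hline Hnn
          (a := ((j:ℕ):ℝ) * v) (b := (((j:ℕ):ℝ) + 2) * v) (by positivity) (by positivity)
        rwa [show (((j:ℕ):ℝ) * v + (((j:ℕ):ℝ) + 2) * v) / 2 = (((j:ℕ):ℝ) + 1) * v by ring]
          at hc
      have hdiv : kap ω s (((j:ℕ):ℝ) * v) / ℓ + kap ω s ((((j:ℕ):ℝ) + 2) * v) / ℓ ≤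
          2 * (kap ω s ((((j:ℕ):ℝ) + 1) * v) / ℓ) := by
        have hd := (div_le_div_iff_of_pos_right hℓ).mpr hkc
        rw [add_div, mul_div_assoc] at hd
        exact hd
      rw [hcast1, hcast2]
      rw [hcast2] at h2
      have e1 : s * (((j:ℕ):ℝ) + 1) * Real.log v * 2 =
          s * ((j:ℕ):ℝ) * Real.log v + s * (((j:ℕ):ℝ) + 2) * Real.log v := by ring
      have e2 : s * (((j:ℕ):ℝ) + 1) * 2 = s * ((j:ℕ):ℝ) + s * (((j:ℕ):ℝ) + 2) := by ring
      linarith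
    linarith
  have hSG : ∀ k : ℕ, Real.log ((k:ℕ):ℝ) * (-s * ((k:ℕ):ℝ)) +
      (kap ω s 0 / ℓ + Phi ω s ℓ ((k:ℕ):ℝ)) =
      sSup (ASet2 ω s ℓ ((k:ℕ):ℝ)) - s * ((k:ℕ):ℝ) + kap ω s 0 / ℓ := by
    intro k
    rcases Nat.eq_zero_or_pos k with h | h
    · subst h
      have hS0 : sSup (ASet2 ω s ℓ ((0:ℕ):ℝ)) = -(kap ω s 0 / ℓ) := by
        apply le_antisymm
        · apply csSup_le (hAne _)
          rintro r ⟨v, hv, rfl⟩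
          simp
        · apply le_csSup (hAbdd 0)
          exact ⟨1, one_pos, by simp⟩
      rw [hS0]
      simp [hPhi0 ℓ hℓ]
    · rw [hS k h]
      ring
  refine ⟨fun j => Gbar (-s) j * Umat ω s ℓ j, ?_, ?_, ?_⟩
  · intro j
    show (0:ℝ) < Gbar (-s) j * Umat ω s ℓ j
    rw [hLexp j]
    exact Real.exp_pos _
  · intro j
    show (Gbar (-s) (j+1) * Umat ω s ℓ (j+1)) ^ 2 ≤
      (Gbar (-s) j * Umat ω s ℓ j) * (Gbar (-s) (j+2) * Umat ω s ℓ (j+2))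
    rw [hLexp (j+1), hLexp j, hLexp (j+2)]
    rw [sq, ← Real.exp_add, ← Real.exp_add, Real.exp_le_exp]
    have h0' := hSG j
    have h1' := hSG (j+1)
    have h2' := hSG (j+2)
    have hG := hmid j
    rw [h0', h1', h2']
    have hc1 : (((j+1:ℕ)):ℝ) = ((j:ℕ):ℝ) + 1 := by push_cast; ring
    have hc2 : (((j+2:ℕ)):ℝ) = ((j:ℕ):ℝ) + 2 := by push_cast; ring
    rw [hc1, hc2] at hG ⊢
    have e2 : s * (((j:ℕ):ℝ) + 1) * 2 = s * ((j:ℕ):ℝ) + s * (((j:ℕ):ℝ) + 2) := by ring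
    linarith
  · exact ⟨1, one_pos, 1, one_pos, fun j => by constructor <;> simp⟩
end
end

section
/- Let 𝓜 = {M^{(p)} : p > 0} be a weight matrix. Suppose that for every p > 0 there exist α_p > 0 and a log-convex sequence L^{(p)} such that (j^{(1−α_p)j}·M^{(p)}_j)_j is equivalent to L^{(p)}, and suppose there exists β ∈ ℝ with β < α_p for all p > 0. Then for every p > 0 one has lim_{j→∞} (j^{(1−β)j}·M^{(p)}_j)^{1/j} = ∞, and the matrices 𝓜 and 𝓜^β are R-equivalent; in particular, for each p the sequence M^{(p,β)} is equivalent to M^{(p')} for suitable p', and A_{{𝓜^β}}(S_γ) = A_{{𝓜}}(S_γ) for every 0 < γ ≤ 2. -/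
open Filter Complex Asymptotics
open scoped Topology BigOperators

noncomputable section

section Helpers

open Real

lemma gbar_eq_exp (s : ℝ) (j : ℕ) : Gbar s j = Real.exp (s * j * Real.log j) := by
  rcases Nat.eq_zero_or_pos j with h | h
  · subst h; simp [Gbar]
  · rw [Gbar, Real.rpow_def_of_pos (by exact_mod_cast h)]
    congr 1; ring

lemma gbar_pos (s : ℝ) (j : ℕ) : 0 < Gbar s j := by
  rw [gbar_eq_exp]; exact Real.exp_pos _

lemma gbar_mul (s t : ℝ) (j : ℕ) : Gbar s j * Gbar t j = Gbar (s + t) j := by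
  rw [gbar_eq_exp, gbar_eq_exp, gbar_eq_exp, ← Real.exp_add]; congr 1; ring

lemma gbar_zero (j : ℕ) : Gbar 0 j = 1 := by rw [gbar_eq_exp]; simp

lemma gbar_logconvex {s : ℝ} (hs : 0 ≤ s) : IsLogConvexSeq (Gbar s) := by
  intro j
  have key : ((j:ℝ)+1) * Real.log ((j:ℝ)+1)
      ≤ (1/2) * ((j:ℝ) * Real.log j) + (1/2) * (((j:ℝ)+2) * Real.log ((j:ℝ)+2)) := by
    have h := Real.convexOn_mul_log.2 (Set.mem_Ici.mpr (Nat.cast_nonneg j))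
      (Set.mem_Ici.mpr (by positivity : (0:ℝ) ≤ (j:ℝ)+2))
      (by norm_num : (0:ℝ) ≤ 1/2) (by norm_num : (0:ℝ) ≤ 1/2) (by norm_num)
    have e : (1/2 : ℝ) • (j:ℝ) + (1/2 : ℝ) • ((j:ℝ)+2) = (j:ℝ)+1 := by
      simp [smul_eq_mul]; ring
    rw [e] at h
    simpa [smul_eq_mul] using h
  rw [gbar_eq_exp, gbar_eq_exp, gbar_eq_exp, sq, ← Real.exp_add, ← Real.exp_add]
  apply Real.exp_le_exp.mpr
  push_cast
  nlinarith [key, hs]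

lemma logconvex_mul {f g : ℕ → ℝ} (hf : IsLogConvexSeq f) (hg : IsLogConvexSeq g)
    (hf0 : ∀ j, 0 ≤ f j) (hg0 : ∀ j, 0 ≤ g j) :
    IsLogConvexSeq (fun j => f j * g j) := by
  intro j
  have h1 : (f (j+1) * g (j+1)) ^ 2 = f (j+1) ^ 2 * g (j+1) ^ 2 := by ring
  have h2 : f (j+1) ^ 2 * g (j+1) ^ 2 ≤ (f j * f (j+2)) * (g j * g (j+2)) :=
    mul_le_mul (hf j) (hg j) (sq_nonneg _) (mul_nonneg (hf0 j) (hf0 (j+2)))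
  calc (f (j+1) * g (j+1)) ^ 2 = f (j+1) ^ 2 * g (j+1) ^ 2 := h1
    _ ≤ (f j * f (j+2)) * (g j * g (j+2)) := h2
    _ = (f j * g j) * (f (j+2) * g (j+2)) := by ring

lemma logconvex_geom (c r : ℝ) : IsLogConvexSeq (fun j => c * r ^ j) := by
  intro j
  have : (c * r ^ (j+1)) ^ 2 = (c * r ^ j) * (c * r ^ (j+2)) := by ring
  exact le_of_eq this

lemma lc_ratio_lower {L : ℕ → ℝ} (hpos : ∀ j, 0 < L j) (hlc : IsLogConvexSeq L) :
    ∀ j, L 0 * (L 1 / L 0) ^ j ≤ L j := by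
  have hr : ∀ j, L 1 / L 0 ≤ L (j+1) / L j := by
    intro j
    induction j with
    | zero => exact le_refl _
    | succ k ih =>
      refine le_trans ih ?_
      rw [div_le_div_iff₀ (hpos k) (hpos (k+1))]
      nlinarith [hlc k, (hpos (k+1)).le]
  intro j
  induction j with
  | zero => simp
  | succ k ih =>
    have h1 : (L 0 * (L 1 / L 0) ^ k) * (L 1 / L 0) ≤ L k * (L (k+1) / L k) := by
      apply mul_le_mul ih (hr k)
        (div_nonneg (hpos 1).le (hpos 0).le) (hpos k).le
    calc L 0 * (L 1 / L 0) ^ (k+1) = (L 0 * (L 1 / L 0) ^ k) * (L 1 / L 0) := by ring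
      _ ≤ L k * (L (k+1) / L k) := h1
      _ = L (k+1) := by rw [mul_comm]; exact div_mul_cancel₀ _ (hpos k).ne'

lemma pow_rpow_inv_eq {y : ℝ} (hy : 0 ≤ y) {j : ℕ} (hj : 1 ≤ j) :
    (y ^ j) ^ ((j:ℝ)⁻¹) = y := by
  have hj0 : (j:ℝ) ≠ 0 := Nat.cast_ne_zero.mpr (Nat.one_le_iff_ne_zero.mp hj)
  rw [← Real.rpow_natCast y j, ← Real.rpow_mul hy, mul_inv_cancel₀ hj0, Real.rpow_one]

lemma rpow_inv_le_of_le_pow {x y : ℝ} (hx : 0 ≤ x) (hy : 0 ≤ y) {j : ℕ} (hj : 1 ≤ j)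
    (h : x ≤ y ^ j) : x ^ ((j:ℝ)⁻¹) ≤ y := by
  have := Real.rpow_le_rpow hx h (by positivity : (0:ℝ) ≤ (j:ℝ)⁻¹)
  rwa [pow_rpow_inv_eq hy hj] at this

lemma min_le_rpow_inv {x : ℝ} (hx : 0 < x) {j : ℕ} (hj : 1 ≤ j) :
    min x 1 ≤ x ^ ((j:ℝ)⁻¹) := by
  have hj1 : (j:ℝ)⁻¹ ≤ 1 := by
    rw [inv_le_one_iff₀]; right; exact_mod_cast hj
  rcases le_total x 1 with h | h
  · calc min x 1 ≤ x := min_le_left _ _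
      _ = x ^ (1:ℝ) := (Real.rpow_one x).symm
      _ ≤ x ^ ((j:ℝ)⁻¹) := Real.rpow_le_rpow_of_exponent_ge hx h hj1
  · calc min x 1 ≤ 1 := min_le_right _ _
      _ ≤ x ^ ((j:ℝ)⁻¹) := Real.one_le_rpow h (by positivity)

lemma ASet_subset_of_bound {N N' : ℕ → ℝ} (A B : ℝ) (hA : 0 < A) (hB : 0 < B)
    (hN : ∀ j, 0 ≤ N j) (h : ∀ j, N j ≤ A * B ^ j * N' j) (γ : ℝ) :
    ASet N γ ⊆ ASet N' γ := by
  rintro f ⟨hd, h₀, hh0, C, hC⟩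
  refine ⟨hd, h₀ * B, by positivity, max C 0 * A, fun j z hz => ?_⟩
  have hb : 0 ≤ h₀ ^ j := by positivity
  calc ‖iteratedDerivWithin j f (Sector γ) z‖ ≤ C * h₀ ^ j * N j := hC j z hz
    _ ≤ max C 0 * h₀ ^ j * N j := by
        apply mul_le_mul_of_nonneg_right _ (hN j)
        exact mul_le_mul_of_nonneg_right (le_max_left _ _) hb
    _ ≤ max C 0 * h₀ ^ j * (A * B ^ j * N' j) := by
        apply mul_le_mul_of_nonneg_left (h j) (by positivity)
    _ = (max C 0 * A) * (h₀ * B) ^ j * N' j := by rw [mul_pow]; ring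

end Helpers

/-- if for every `p` there are `α_p` (with a uniform lower bound `β < α_p`)
and a log-convex sequence equivalent to `(j^{(1-α_p)j}M^{(p)}_j)_j`, then
`lim (j^{(1-β)j}M^{(p)}_j)^{1/j} = ∞`, `𝓜` and `𝓜^β` are `R`-equivalent (each `M^{(p,β)}`
being equivalent to a suitable `M^{(p')}`), and the associated classes coincide on every
sector. -/
theorem stmt_16 (M : ℝ → ℕ → ℝ) (hM : IsWeightMatrix M) (β : ℝ)
    (αp : ℝ → ℝ) (hβ : ∀ p > (0:ℝ), 0 < αp p ∧ β < αp p)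
    (hyp : ∀ p > (0:ℝ), ∃ L : ℕ → ℝ, (∀ j, 0 < L j) ∧ IsLogConvexSeq L ∧
      SeqEquiv (fun j => Gbar (1 - αp p) j * M p j) L)
    (Lβ : ℝ → ℕ → ℝ)
    (hLβ : ∀ p > (0:ℝ), IsLcMinorant (fun j => Gbar (1 - β) j * M p j) (Lβ p)) :
    (∀ p > (0:ℝ), Filter.Tendsto
      (fun j : ℕ => (Gbar (1 - β) j * M p j) ^ ((j:ℝ)⁻¹)) Filter.atTop Filter.atTop) ∧
    REquivMat M (fun p j => Gbar (β - 1) j * Lβ p j) ∧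
    (∀ p > (0:ℝ), ∃ p' > (0:ℝ),
      SeqEquiv (fun j => Gbar (β - 1) j * Lβ p j) (M p')) ∧
    (∀ γ : ℝ, 0 < γ → γ ≤ 2 →
      AMatSet (fun p j => Gbar (β - 1) j * Lβ p j) γ = AMatSet M γ) := by
  obtain ⟨hMpos, hM0, hMmono⟩ := hM
  -- identity: Gbar (β-1) j * (Gbar (1-β) j * x) = x
  have gid : ∀ (j : ℕ) (x : ℝ), Gbar (β-1) j * (Gbar (1-β) j * x) = x := by
    intro j x
    rw [← mul_assoc, gbar_mul, show β - 1 + (1 - β) = 0 by ring, gbar_zero, one_mul]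
  -- THE KEY SANDWICH
  have key : ∀ p > (0:ℝ), ∃ A : ℝ, 1 ≤ A ∧
      (∀ j, Gbar (β-1) j * Lβ p j ≤ M p j) ∧
      (∀ j, M p j ≤ A * A ^ j * (Gbar (β-1) j * Lβ p j)) := by
    intro p hp
    obtain ⟨L, hLpos, hLlc, A, hA, B, hB, hE⟩ := hyp p hp
    obtain ⟨hLβpos, hLβlc, hLβle, hLβmax⟩ := hLβ p hp
    have hs : 0 < αp p - β := sub_pos.mpr (hβ p hp).2
    -- a j = Gbar s j * b j
    have hab : ∀ j, Gbar (1-β) j * M p j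
        = Gbar (αp p - β) j * (Gbar (1 - αp p) j * M p j) := by
      intro j
      rw [← mul_assoc, gbar_mul, show αp p - β + (1 - αp p) = 1 - β by ring]
    -- the competitor log-convex sequence
    set L' : ℕ → ℝ := fun j => (Gbar (αp p - β) j * L j) * (A⁻¹ * (B⁻¹) ^ j) with hL'
    have hL'pos : ∀ j, 0 < L' j := by
      intro j
      have := gbar_pos (αp p - β) j
      have := hLpos j
      positivity
    have hL'lc : IsLogConvexSeq L' := by
      apply logconvex_mul
      · exact logconvex_mul (gbar_logconvex hs.le) hLlc
          (fun j => (gbar_pos _ j).le) (fun j => (hLpos j).le)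
      · exact logconvex_geom A⁻¹ B⁻¹
      · exact fun j => mul_nonneg (gbar_pos _ j).le (hLpos j).le
      · intro j; positivity
    have hL'le : ∀ j, L' j ≤ Gbar (1-β) j * M p j := by
      intro j
      rw [hab j]
      have h2 := (hE j).2
      have hc : (0:ℝ) < A⁻¹ * (B⁻¹) ^ j := by positivity
      have hcancel : (A⁻¹ * (B⁻¹) ^ j) * (A * B ^ j) = 1 := by
        rw [inv_pow]; field_simp
      have : L j * (A⁻¹ * (B⁻¹) ^ j) ≤ Gbar (1 - αp p) j * M p j := by
        calc L j * (A⁻¹ * (B⁻¹) ^ j)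
            ≤ (A * B ^ j * (Gbar (1 - αp p) j * M p j)) * (A⁻¹ * (B⁻¹) ^ j) :=
              mul_le_mul_of_nonneg_right h2 hc.le
          _ = ((A⁻¹ * (B⁻¹) ^ j) * (A * B ^ j)) * (Gbar (1 - αp p) j * M p j) := by ring
          _ = Gbar (1 - αp p) j * M p j := by rw [hcancel, one_mul]
      calc L' j = Gbar (αp p - β) j * (L j * (A⁻¹ * (B⁻¹) ^ j)) := by rw [hL']; ring
        _ ≤ Gbar (αp p - β) j * (Gbar (1 - αp p) j * M p j) :=
            mul_le_mul_of_nonneg_left this (gbar_pos _ j).le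
    have hL'Lβ : ∀ j, L' j ≤ Lβ p j := hLβmax L' hL'pos hL'lc hL'le
    -- upper bound: a j ≤ A^2 (B^2)^j Lβ p j
    have haup : ∀ j, Gbar (1-β) j * M p j ≤ A^2 * (B^2) ^ j * Lβ p j := by
      intro j
      have h1 := (hE j).1
      have heq : A^2 * (B^2) ^ j * L' j = A * B ^ j * (Gbar (αp p - β) j * L j) := by
        rw [hL']
        simp only [inv_pow]
        field_simp
        ring
      calc Gbar (1-β) j * M p j
          = Gbar (αp p - β) j * (Gbar (1 - αp p) j * M p j) := hab j
        _ ≤ Gbar (αp p - β) j * (A * B ^ j * L j) :=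
            mul_le_mul_of_nonneg_left h1 (gbar_pos _ j).le
        _ = A^2 * (B^2) ^ j * L' j := by rw [heq]; ring
        _ ≤ A^2 * (B^2) ^ j * Lβ p j := by
            apply mul_le_mul_of_nonneg_left (hL'Lβ j) (by positivity)
    -- package with a single constant D
    refine ⟨max (A^2) (max (B^2) 1), le_trans (le_max_right _ _) (le_max_right _ _), ?_, ?_⟩
    · intro j
      have := mul_le_mul_of_nonneg_left (hLβle j) (gbar_pos (β-1) j).le
      rw [gid j (M p j)] at this
      exact this
    · intro j
      set D := max (A^2) (max (B^2) 1) with hD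
      have hD1 : (1:ℝ) ≤ D := le_trans (le_max_right _ _) (le_max_right _ _)
      have hAD : A^2 ≤ D := le_max_left _ _
      have hBD : B^2 ≤ D := le_trans (le_max_left _ _) (le_max_right _ _)
      have hLβp := hLβpos j
      have step : M p j ≤ D * D ^ j * (Gbar (β-1) j * Lβ p j) := by
        have h := mul_le_mul_of_nonneg_left (haup j) (gbar_pos (β-1) j).le
        rw [gid j (M p j)] at h
        calc M p j ≤ Gbar (β-1) j * (A^2 * (B^2) ^ j * Lβ p j) := h
          _ = A^2 * (B^2) ^ j * (Gbar (β-1) j * Lβ p j) := by ring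
          _ ≤ D * D ^ j * (Gbar (β-1) j * Lβ p j) := by
              apply mul_le_mul_of_nonneg_right _
                (mul_nonneg (gbar_pos _ j).le hLβp.le)
              exact mul_le_mul hAD (pow_le_pow_left₀ (sq_nonneg B) hBD j)
                (by positivity) (by linarith)
      exact step
  refine ⟨?_, ⟨?_, ?_⟩, ?_, ?_⟩
  -- PART 1: tendsto
  · intro p hp
    obtain ⟨L, hLpos, hLlc, A, hA, B, hB, hE⟩ := hyp p hp
    have hs : 0 < αp p - β := sub_pos.mpr (hβ p hp).2
    set r : ℝ := L 1 / L 0 with hrdef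
    have hr : 0 < r := div_pos (hLpos 1) (hLpos 0)
    set d : ℝ := r / B with hddef
    have hd : 0 < d := div_pos hr hB
    set c : ℝ := min (L 0 / A) 1 with hcdef
    have hc : 0 < c := lt_min (div_pos (hLpos 0) hA) one_pos
    have hb_low : ∀ j, (L 0 / A) * d ^ j ≤ Gbar (1 - αp p) j * M p j := by
      intro j
      have h2 := (hE j).2
      have hrl := lc_ratio_lower hLpos hLlc j
      have expand : (L 0 / A) * d ^ j = (L 0 * r ^ j) / (A * B ^ j) := by
        rw [hddef, div_pow]; field_simp
      rw [expand, div_le_iff₀ (by positivity)]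
      calc L 0 * r ^ j ≤ L j := hrl
        _ ≤ A * B ^ j * (Gbar (1 - αp p) j * M p j) := h2
        _ = Gbar (1 - αp p) j * M p j * (A * B ^ j) := by ring
    have ha_low : ∀ j, (L 0 / A) * d ^ j * Gbar (αp p - β) j
        ≤ Gbar (1-β) j * M p j := by
      intro j
      have hab : Gbar (1-β) j * M p j
          = Gbar (αp p - β) j * (Gbar (1 - αp p) j * M p j) := by
        rw [← mul_assoc, gbar_mul, show αp p - β + (1 - αp p) = 1 - β by ring]
      rw [hab, mul_comm]
      exact mul_le_mul_of_nonneg_left (hb_low j) (gbar_pos _ j).le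
    have hmain : ∀ j : ℕ, 1 ≤ j →
        c * d * (j:ℝ) ^ (αp p - β) ≤ (Gbar (1-β) j * M p j) ^ ((j:ℝ)⁻¹) := by
      intro j hj
      have hj0 : ((j:ℝ)) ≠ 0 := Nat.cast_ne_zero.mpr (Nat.one_le_iff_ne_zero.mp hj)
      have hLA : 0 < L 0 / A := div_pos (hLpos 0) hA
      have hLA0 : 0 < L 0 / A := div_pos (hLpos 0) hA
      have step := Real.rpow_le_rpow
        (mul_nonneg (mul_nonneg hLA0.le (pow_nonneg hd.le j)) (gbar_pos _ j).le)
        (ha_low j) (by positivity : (0:ℝ) ≤ (j:ℝ)⁻¹)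
      have hcalc : ((L 0 / A) * d ^ j * Gbar (αp p - β) j) ^ ((j:ℝ)⁻¹)
          = (L 0 / A) ^ ((j:ℝ)⁻¹) * d * (j:ℝ) ^ (αp p - β) := by
        rw [Real.mul_rpow (mul_nonneg hLA.le (pow_nonneg hd.le j)) (gbar_pos _ j).le,
          Real.mul_rpow hLA.le (pow_nonneg hd.le j), pow_rpow_inv_eq hd.le hj]
        congr 1
        rw [Gbar, ← Real.rpow_mul (Nat.cast_nonneg j)]
        congr 1
        field_simp
      rw [hcalc] at step
      refine le_trans ?_ step
      have h1 : c ≤ (L 0 / A) ^ ((j:ℝ)⁻¹) := min_le_rpow_inv hLA hj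
      have : c * d ≤ (L 0 / A) ^ ((j:ℝ)⁻¹) * d :=
        mul_le_mul_of_nonneg_right h1 hd.le
      exact mul_le_mul_of_nonneg_right this (by positivity)
    have htend : Filter.Tendsto (fun j : ℕ => c * d * (j:ℝ) ^ (αp p - β))
        Filter.atTop Filter.atTop := by
      apply Filter.Tendsto.const_mul_atTop (by positivity : (0:ℝ) < c * d)
      exact (tendsto_rpow_atTop hs).comp tendsto_natCast_atTop_atTop
    exact tendsto_atTop_mono' Filter.atTop
      (Filter.eventually_atTop.mpr ⟨1, hmain⟩) htend
  -- PART 2a: MatPreceq M Mβ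
  · intro p hp
    obtain ⟨A, hA, hlow, hup⟩ := key p hp
    refine ⟨p, hp, A * A, fun j hj => ?_⟩
    have hMβpos : 0 < Gbar (β-1) j * Lβ p j :=
      mul_pos (gbar_pos _ _) ((hLβ p hp).1 j)
    apply rpow_inv_le_of_le_pow
      (div_nonneg (hMpos p hp j).le hMβpos.le) (by positivity) hj
    rw [div_le_iff₀ hMβpos]
    have hAj : A * A ^ j ≤ (A * A) ^ j := by
      rw [mul_pow]
      exact mul_le_mul_of_nonneg_right
        (le_self_pow₀ (by linarith) (Nat.one_le_iff_ne_zero.mp hj)) (by positivity)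
    calc M p j ≤ A * A ^ j * (Gbar (β-1) j * Lβ p j) := hup j
      _ ≤ (A * A) ^ j * (Gbar (β-1) j * Lβ p j) :=
          mul_le_mul_of_nonneg_right hAj hMβpos.le
  -- PART 2b: MatPreceq Mβ M
  · intro p hp
    obtain ⟨A, hA, hlow, hup⟩ := key p hp
    refine ⟨p, hp, 1, fun j hj => ?_⟩
    have hMβpos : 0 < Gbar (β-1) j * Lβ p j :=
      mul_pos (gbar_pos _ _) ((hLβ p hp).1 j)
    apply Real.rpow_le_one (div_nonneg hMβpos.le (hMpos p hp j).le)
      ((div_le_one (hMpos p hp j)).mpr (hlow j)) (by positivity)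
  -- PART 3: SeqEquiv
  · intro p hp
    obtain ⟨A, hA, hlow, hup⟩ := key p hp
    refine ⟨p, hp, A, by linarith, A, by linarith, fun j => ?_⟩
    constructor
    · have h1 : (1:ℝ) ≤ A * A ^ j := by
        calc (1:ℝ) = 1 * 1 := by ring
          _ ≤ A * A ^ j := mul_le_mul hA (one_le_pow₀ hA) one_pos.le (by linarith)
      calc Gbar (β-1) j * Lβ p j ≤ M p j := hlow j
        _ = 1 * M p j := (one_mul _).symm
        _ ≤ A * A ^ j * M p j :=
            mul_le_mul_of_nonneg_right h1 (hMpos p hp j).le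
    · exact hup j
  -- PART 4: classes coincide
  · intro γ hγ hγ2
    ext f
    simp only [AMatSet, Set.mem_setOf_eq]
    constructor
    · rintro ⟨p, hp, hf⟩
      obtain ⟨A, hA, hlow, hup⟩ := key p hp
      refine ⟨p, hp, ASet_subset_of_bound 1 1 one_pos one_pos
        (fun j => (mul_pos (gbar_pos _ _) ((hLβ p hp).1 j)).le)
        (fun j => by simpa using hlow j) γ hf⟩
    · rintro ⟨p, hp, hf⟩
      obtain ⟨A, hA, hlow, hup⟩ := key p hp
      refine ⟨p, hp, ASet_subset_of_bound A A (by linarith) (by linarith)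
        (fun j => (hMpos p hp j).le) hup γ hf⟩
end
end
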